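/- Let K ⊂ ℝ² be compact with diam(K) ≤ d, d > 0. Let a : ℝ² → ℝ be measurable and bounded with a(y) = 0 for y ∉ K, and let g ∈ L²(ℝ²) with g(y) = 0 for y ∉ K. Then the function W(x) = |a(x)| ∫_{S¹} ∫₀^∞ |g(x+tθ)| exp(−∫₀^t a(x+sθ) ds) dt dθ belongs to L²(ℝ²) and ‖W‖_{L²(ℝ²)} ≤ 4π d e^{d‖a‖_∞} ‖a‖_∞ ‖g‖_{L²(ℝ²)}. -/

import Mathlib

/-
Because `a` and `g` vanish off `K` and `diam K ≤ d`, the attenuation exponent along any ray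
is at most `d‖a‖_∞`, and a ray from a point of `K` meets the support of `g` only for
`t ≤ d`. Hence `W x ≤ ‖a‖_∞ e^{d‖a‖_∞} ∫_{(0,2π] × (0,d]} |g(x + t θ)|`. Cauchy–Schwarz on
this measure space of mass `2πd`, followed by Tonelli and translation invariance of Lebesgue
measure, gives `‖W‖₂ ≤ 2πd e^{d‖a‖_∞} ‖a‖_∞ ‖g‖₂`. As `g` is only a.e. measurable, `|g|` is
first replaced by a measurable majorant equal to it almost everywhere.
-/

open MeasureTheory Real Set
open scoped ENNReal

/-- The unit direction vector in `ℝ²` with angle `φ`; integrating over `φ ∈ (0, 2π]`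
realizes integration over the unit circle `S¹` with its arclength measure. -/
noncomputable def dir (φ : ℝ) : EuclideanSpace ℝ (Fin 2) :=
  (WithLp.equiv 2 (Fin 2 → ℝ)).symm ![Real.cos φ, Real.sin φ]

open Metric

lemma AEMeasurable.exists_measurable_ge_ae_eq {α : Type*} [MeasurableSpace α] {μ : Measure α}
    {f : α → ℝ≥0∞} (hf : AEMeasurable f μ) : ∃ g, Measurable g ∧ f ≤ g ∧ g =ᵐ[μ] f := by
  classical
  set N := toMeasurable μ {x | f x ≠ hf.mk f x}
  have hN : μ N = 0 := by rw [measure_toMeasurable]; exact hf.ae_eq_mk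
  refine ⟨N.piecewise ⊤ (hf.mk f),
    measurable_const.piecewise (measurableSet_toMeasurable _ _) hf.measurable_mk, fun x => ?_, ?_⟩
  · by_cases hx : x ∈ N
    · simp [hx]
    · have : f x = hf.mk f x := not_not.1 fun h => hx (subset_toMeasurable _ _ h)
      simp [hx, this]
  · filter_upwards [measure_eq_zero_iff_ae_notMem.1 hN, hf.ae_eq_mk] with x hxN hx
    simp [hxN, hx]

lemma lintegral_sq_le_measure_univ_mul {α : Type*} [MeasurableSpace α] (μ : Measure α)
    {f : α → ℝ≥0∞} (hf : AEMeasurable f μ) :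
    (∫⁻ x, f x ∂μ) ^ 2 ≤ μ univ * ∫⁻ x, f x ^ 2 ∂μ := by
  have hHolder := ENNReal.lintegral_mul_le_Lp_mul_Lq μ Real.HolderConjugate.two_two
    aemeasurable_const hf (f := fun _ => 1)
  simp only [Pi.mul_apply, one_mul, ENNReal.one_rpow, lintegral_const, one_mul] at hHolder
  calc (∫⁻ x, f x ∂μ) ^ 2
      ≤ ((μ univ) ^ (1 / 2 : ℝ) * (∫⁻ x, f x ^ (2 : ℝ) ∂μ) ^ (1 / 2 : ℝ)) ^ 2 :=
        pow_le_pow_left' hHolder 2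
    _ = μ univ * ∫⁻ x, f x ^ 2 ∂μ := by
        rw [mul_pow, ← ENNReal.rpow_natCast, ← ENNReal.rpow_natCast, ← ENNReal.rpow_mul,
          ← ENNReal.rpow_mul]
        norm_num

lemma lintegral_sq_lintegral_add_le {G P : Type*} [MeasurableSpace G] [AddGroup G]
    [MeasurableAdd₂ G] (μ : Measure G) [μ.IsAddRightInvariant] [SFinite μ]
    [MeasurableSpace P] (ν : Measure P) [SFinite ν] {v : P → G} (hv : Measurable v)
    {u : G → ℝ≥0∞} (hu : Measurable u) :
    ∫⁻ x, (∫⁻ p, u (x + v p) ∂ν) ^ 2 ∂μ ≤ ν univ ^ 2 * ∫⁻ y, u y ^ 2 ∂μ := by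
  have hmeas : Measurable fun q : G × P => u (q.1 + v q.2) ^ 2 :=
    (hu.comp (measurable_fst.add (hv.comp measurable_snd))).pow_const 2
  calc ∫⁻ x, (∫⁻ p, u (x + v p) ∂ν) ^ 2 ∂μ
      ≤ ∫⁻ x, ν univ * ∫⁻ p, u (x + v p) ^ 2 ∂ν ∂μ :=
        lintegral_mono fun x => lintegral_sq_le_measure_univ_mul ν
          (hu.comp (measurable_const.add hv)).aemeasurable
    _ = ν univ * ∫⁻ p, ∫⁻ x, u (x + v p) ^ 2 ∂μ ∂ν := by
        rw [lintegral_const_mul _ hmeas.lintegral_prod_right',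
          lintegral_lintegral_swap hmeas.aemeasurable]
    _ = ν univ ^ 2 * ∫⁻ y, u y ^ 2 ∂μ := by
        simp_rw [lintegral_add_right_eq_self (fun y => u y ^ 2), lintegral_const]
        ring

lemma abs_intervalIntegral_le_of_eq_zero_off {f : ℝ → ℝ} {T : Set ℝ} {d A : ℝ}
    (hT : Bornology.IsBounded T) (hTd : diam T ≤ d) (hd : 0 ≤ d)
    (hfT : ∀ s ∉ T, f s = 0) (hf : ∀ s, |f s| ≤ A) (b c : ℝ) :
    |∫ s in b..c, f s| ≤ d * A := by
  set T' := toMeasurable volume T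
  have hvol : volume T' ≤ ENNReal.ofReal d := by
    rw [measure_toMeasurable]
    exact (Real.volume_le_diam T).trans (ediam_le_of_forall_dist_le fun s hs s' hs' =>
      (dist_le_diam_of_mem hT hs hs').trans hTd)
  have hf_eq : T'.indicator f = f := indicator_eq_self.2 fun s hs =>
    subset_toMeasurable _ _ (not_not.1 fun h => hs (hfT s h))
  have hA : 0 ≤ A := (abs_nonneg _).trans (hf 0)
  have hvol_inter : volume.real (uIoc b c ∩ T') ≤ d :=
    ENNReal.toReal_le_of_le_ofReal hd ((measure_mono inter_subset_right).trans hvol)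
  rw [intervalIntegral.abs_integral_eq_abs_integral_uIoc, ← hf_eq,
    setIntegral_indicator (measurableSet_toMeasurable _ _)]
  calc |∫ s in uIoc b c ∩ T', f s| ≤ A * volume.real (uIoc b c ∩ T') :=
        norm_setIntegral_le_of_norm_le_const (f := f)
          (((measure_mono inter_subset_right).trans hvol).trans_lt ENNReal.ofReal_lt_top)
          fun s _ => hf s
    _ ≤ d * A := by rw [mul_comm]; exact mul_le_mul_of_nonneg_right hvol_inter hA

section Rays

variable {E : Type*} [NormedAddCommGroup E] [NormedSpace ℝ E]

lemma isometry_add_smul_of_norm_eq_one (x : E) {θ : E} (hθ : ‖θ‖ = 1) :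
    Isometry fun s : ℝ => x + s • θ :=
  Isometry.of_dist_eq fun s s' => by
    rw [dist_add_left, dist_eq_norm, ← sub_smul, norm_smul, hθ, mul_one, Real.dist_eq,
      Real.norm_eq_abs]

variable {K : Set E} {d A : ℝ} {a g : E → ℝ} {u : E → ℝ≥0∞}

lemma abs_intervalIntegral_add_smul_le (hK : Bornology.IsBounded K) (hKd : diam K ≤ d)
    (hd : 0 ≤ d) (ha : ∀ y, |a y| ≤ A) (hasupp : ∀ y ∉ K, a y = 0) (x : E) {θ : E}
    (hθ : ‖θ‖ = 1) (b c : ℝ) :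
    |∫ s in b..c, a (x + s • θ)| ≤ d * A := by
  have hiso := isometry_add_smul_of_norm_eq_one x hθ
  refine abs_intervalIntegral_le_of_eq_zero_off (hiso.antilipschitz.isBounded_preimage hK) ?_ hd
    (fun s hs => hasupp _ hs) (fun s => ha _) b c
  rw [← hiso.diam_image]
  exact (diam_mono (image_preimage_subset _ _) hK).trans hKd

lemma lintegral_attenuated_ray_le (hK : Bornology.IsBounded K) (hKd : diam K ≤ d)
    (hd : 0 ≤ d) (ha : ∀ y, |a y| ≤ A) (hasupp : ∀ y ∉ K, a y = 0)
    (hgsupp : ∀ y ∉ K, g y = 0) (hgu : ∀ y, ‖g y‖ₑ ≤ u y) {x : E} (hx : x ∈ K) {θ : E}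
    (hθ : ‖θ‖ = 1) :
    ∫⁻ t in Ioi 0, ENNReal.ofReal (|g (x + t • θ)| * exp (-∫ s in (0 : ℝ)..t, a (x + s • θ))) ≤
      ENNReal.ofReal (exp (d * A)) * ∫⁻ t in Ioc 0 d, u (x + t • θ) := by
  have hpoint : ∀ t ∈ Ioi (0 : ℝ),
      ENNReal.ofReal (|g (x + t • θ)| * exp (-∫ s in (0 : ℝ)..t, a (x + s • θ))) ≤
        (Ioc 0 d).indicator (fun t => ENNReal.ofReal (exp (d * A)) * u (x + t • θ)) t := by
    intro t ht
    by_cases hg0 : g (x + t • θ) = 0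
    · simp [hg0]
    have htd : t ≤ d := by
      have hdist := (isometry_add_smul_of_norm_eq_one x hθ).dist_eq t 0
      rw [zero_smul, add_zero, Real.dist_0_eq_abs, abs_of_pos ht] at hdist
      rw [← hdist]
      exact (dist_le_diam_of_mem hK (not_not.1 fun h => hg0 (hgsupp _ h)) hx).trans hKd
    have hexp : exp (-∫ s in (0 : ℝ)..t, a (x + s • θ)) ≤ exp (d * A) :=
      exp_le_exp.2 ((neg_le_abs _).trans (abs_intervalIntegral_add_smul_le hK hKd hd ha hasupp
        x hθ 0 t))
    rw [indicator_of_mem (show t ∈ Ioc 0 d from ⟨ht, htd⟩), mul_comm,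
      ENNReal.ofReal_mul (exp_nonneg _), ← Real.enorm_eq_ofReal_abs]
    exact mul_le_mul' (ENNReal.ofReal_le_ofReal hexp) (hgu _)
  calc _ ≤ ∫⁻ t in Ioi 0,
        (Ioc 0 d).indicator (fun t => ENNReal.ofReal (exp (d * A)) * u (x + t • θ)) t :=
        setLIntegral_mono' measurableSet_Ioi hpoint
    _ = ∫⁻ t in Ioc 0 d, ENNReal.ofReal (exp (d * A)) * u (x + t • θ) := by
        rw [lintegral_indicator measurableSet_Ioc, Measure.restrict_restrict measurableSet_Ioc,
          inter_eq_left.2 Ioc_subset_Ioi_self]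
    _ = _ := lintegral_const_mul' _ _ ENNReal.ofReal_ne_top

lemma enorm_mul_lintegral_attenuated_rays_le {ι : Type*} [MeasurableSpace ι] (ν : Measure ι)
    {θ : ι → E} (hθ : ∀ i, ‖θ i‖ = 1) (hK : Bornology.IsBounded K) (hKd : diam K ≤ d)
    (hd : 0 ≤ d) (ha : ∀ y, |a y| ≤ A) (hasupp : ∀ y ∉ K, a y = 0)
    (hgsupp : ∀ y ∉ K, g y = 0) (hgu : ∀ y, ‖g y‖ₑ ≤ u y) (x : E) :
    ‖a x‖ₑ * ∫⁻ i, (∫⁻ t in Ioi 0,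
        ENNReal.ofReal (|g (x + t • θ i)| * exp (-∫ s in (0 : ℝ)..t, a (x + s • θ i)))) ∂ν ≤
      ENNReal.ofReal (A * exp (d * A)) * ∫⁻ i, (∫⁻ t in Ioc 0 d, u (x + t • θ i)) ∂ν := by
  by_cases hax : a x = 0
  · simp [hax]
  have hx : x ∈ K := not_not.1 fun h => hax (hasupp x h)
  rw [ENNReal.ofReal_mul ((abs_nonneg _).trans (ha x)), mul_assoc,
    ← lintegral_const_mul' _ _ ENNReal.ofReal_ne_top, Real.enorm_eq_ofReal_abs]
  exact mul_le_mul' (ENNReal.ofReal_le_ofReal (ha x)) (lintegral_mono fun i =>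
    lintegral_attenuated_ray_le hK hKd hd ha hasupp hgsupp hgu hx (hθ i))

end Rays

lemma prod_restrict_Ioc_apply_univ {b c : ℝ} (hb : 0 ≤ b) :
    ((volume.restrict (Ioc 0 b)).prod (volume.restrict (Ioc 0 c))) univ =
      ENNReal.ofReal (b * c) := by
  rw [← univ_prod_univ, Measure.prod_prod, Measure.restrict_apply_univ,
    Measure.restrict_apply_univ, Real.volume_Ioc, Real.volume_Ioc, sub_zero, sub_zero,
    ENNReal.ofReal_mul hb]

lemma continuous_dir : Continuous dir :=
  (PiLp.continuous_toLp _ _).comp <| continuous_pi fun i => by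
    fin_cases i
    · exact Real.continuous_cos
    · exact Real.continuous_sin

lemma norm_dir (φ : ℝ) : ‖dir φ‖ = 1 := by
  simp [EuclideanSpace.norm_eq, dir, Fin.sum_univ_two]

theorem stmt8_general (K : Set (EuclideanSpace ℝ (Fin 2))) (hK : IsCompact K)
    (d : ℝ) (hd : Metric.diam K ≤ d) (hdpos : 0 < d)
    (a : EuclideanSpace ℝ (Fin 2) → ℝ)
    -- `A = ‖a‖_∞`, in particular `a` is bounded
    (A : ℝ) (hA : IsLUB (Set.range fun y => |a y|) A)
    (hasupp : ∀ y ∉ K, a y = 0)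
    (g : EuclideanSpace ℝ (Fin 2) → ℝ) (hg : MemLp g 2 volume)
    (hgsupp : ∀ y ∉ K, g y = 0) :
    (∫⁻ x,
        ((‖a x‖₊ : ℝ≥0∞) *
          ∫⁻ φ in Set.Ioc 0 (2 * π), ∫⁻ t in Set.Ioi (0 : ℝ),
            ENNReal.ofReal (|g (x + t • dir φ)| *
              Real.exp (-∫ s in (0:ℝ)..t, a (x + s • dir φ)))) ^ 2) ≤
      ENNReal.ofReal (4 * π * d * Real.exp (d * A) * A) ^ 2 *
        ∫⁻ x, (‖g x‖₊ : ℝ≥0∞) ^ 2 := by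
  have ha : ∀ y, |a y| ≤ A := fun y => hA.1 ⟨y, rfl⟩
  have hA0 : 0 ≤ A := (abs_nonneg _).trans (ha 0)
  obtain ⟨u, hu, hgu, hu_ae⟩ := hg.aestronglyMeasurable.enorm.exists_measurable_ge_ae_eq
  set ν := (volume.restrict (Ioc 0 (2 * π))).prod (volume.restrict (Ioc 0 d))
  have hv : Measurable fun p : ℝ × ℝ => p.2 • dir p.1 :=
    (continuous_snd.smul (continuous_dir.comp continuous_fst)).measurable
  calc _ ≤ ∫⁻ x, (ENNReal.ofReal (A * exp (d * A)) * ∫⁻ p, u (x + p.2 • dir p.1) ∂ν) ^ 2 := by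
        refine lintegral_mono fun x => pow_le_pow_left' ?_ 2
        rw [lintegral_prod (fun p => u (x + p.2 • dir p.1))
          (hu.comp (measurable_const.add hv)).aemeasurable]
        exact enorm_mul_lintegral_attenuated_rays_le _ norm_dir hK.isBounded hd hdpos.le ha
          hasupp hgsupp hgu x
    _ = ENNReal.ofReal (A * exp (d * A)) ^ 2 * ∫⁻ x, (∫⁻ p, u (x + p.2 • dir p.1) ∂ν) ^ 2 := by
        simp_rw [mul_pow]
        exact lintegral_const_mul' _ _ (ENNReal.pow_ne_top ENNReal.ofReal_ne_top)
    _ ≤ ENNReal.ofReal (A * exp (d * A)) ^ 2 * (ν univ ^ 2 * ∫⁻ y, u y ^ 2) := by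
        gcongr
        exact lintegral_sq_lintegral_add_le volume ν hv hu
    _ = ENNReal.ofReal (2 * π * d * exp (d * A) * A) ^ 2 * ∫⁻ x, (‖g x‖₊ : ℝ≥0∞) ^ 2 := by
        rw [lintegral_congr_ae (hu_ae.mono fun y hy => congrArg (· ^ 2) hy),
          prod_restrict_Ioc_apply_univ (by positivity), ← mul_assoc, ← mul_pow,
          ← ENNReal.ofReal_mul (by positivity)]
        simp only [enorm_eq_nnnorm]
        congr 3
        ring
    _ ≤ _ := by
        gcongr
        nlinarith [pi_pos, exp_pos (d * A)]

/-- For compact `K` with `diam K ≤ d`, `a` bounded measurable supported in `K` with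
`A = ‖a‖_∞`, and `g ∈ L²` supported in `K`, the function
`W(x) = |a(x)| ∫_{S¹} ∫₀^∞ |g(x+tθ)| exp(−∫₀^t a(x+sθ) ds) dt dθ`
is in `L²(ℝ²)` with `‖W‖_{L²} ≤ 4 π d e^{d‖a‖_∞} ‖a‖_∞ ‖g‖_{L²}`, expressed here via
lower Lebesgue integrals: `∫ W² ≤ (4 π d e^{dA} A)² ∫ |g|²`. -/
theorem stmt8 (K : Set (EuclideanSpace ℝ (Fin 2))) (hK : IsCompact K)
    (d : ℝ) (hd : Metric.diam K ≤ d) (hdpos : 0 < d)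
    (a : EuclideanSpace ℝ (Fin 2) → ℝ) (hameas : Measurable a)
    -- `A = ‖a‖_∞`, in particular `a` is bounded
    (A : ℝ) (hA : IsLUB (Set.range fun y => |a y|) A)
    (hasupp : ∀ y ∉ K, a y = 0)
    (g : EuclideanSpace ℝ (Fin 2) → ℝ) (hg : MemLp g 2 volume)
    (hgsupp : ∀ y ∉ K, g y = 0) :
    (∫⁻ x,
        ((‖a x‖₊ : ℝ≥0∞) *
          ∫⁻ φ in Set.Ioc 0 (2 * π), ∫⁻ t in Set.Ioi (0 : ℝ),
            ENNReal.ofReal (|g (x + t • dir φ)| *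
              Real.exp (-∫ s in (0:ℝ)..t, a (x + s • dir φ)))) ^ 2) ≤
      ENNReal.ofReal (4 * π * d * Real.exp (d * A) * A) ^ 2 *
        ∫⁻ x, (‖g x‖₊ : ℝ≥0∞) ^ 2 :=
  stmt8_general K hK d hd hdpos a A hA hasupp g hg hgsupp
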